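/- For any vertex x in a connected resistance network, the evaluation functional L_x u := u(x) - u(o) is bounded with respect to the energy norm: |u(x)-u(o)| ≤ k·E(u)^{1/2}, where k² = Σ_{i=1}^n 1/c_{x_{i-1}x_i} for any path (o = x_0, x_1, ..., x_n = x) with positive conductances along edges. -/

import Mathlib

/-!
Telescoping along a walk and Cauchy–Schwarz give
`|u x - u o| ≤ (∑ 1 / c_e)^{1/2} (∑ c_e (u e₀ - u e₁)²)^{1/2}`,
both sums running over the steps `e` of the walk. If no edge is traversed twice, the second sum
is at most `E(u)`, because `E(u)` counts every edge once in each direction. Erasing loops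
(`SimpleGraph.Walk.bypass`) yields such a walk, and only drops terms from the first sum.
-/

open SimpleGraph

section

variable {V : Type*}

noncomputable def energy (c : V → V → ℝ) (u : V → ℝ) : ℝ :=
  (1 / 2) * ∑' q : V × V, c q.1 q.2 * (u q.1 - u q.2) ^ 2

def conductanceGraph (c : V → V → ℝ) : SimpleGraph V :=
  SimpleGraph.fromRel fun x y => 0 < c x y

theorem conductanceGraph_pos {c : V → V → ℝ} (hsymm : ∀ x y, c x y = c y x)
    (d : (conductanceGraph c).Dart) : 0 < c d.fst d.snd := by
  rcases d.adj.2 with h | h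
  · exact h
  · rwa [hsymm]

theorem two_mul_sum_le_tsum_of_swap_notMem {f : V × V → ℝ} (hf : Summable f)
    (hf0 : ∀ q, 0 ≤ f q) (hswap : ∀ q, f q.swap = f q) {s : Finset (V × V)}
    (hs : ∀ q ∈ s, q.swap ∉ s) : 2 * ∑ q ∈ s, f q ≤ ∑' q, f q := by
  classical
  have hdisj : Disjoint s (s.image Prod.swap) := by
    refine Finset.disjoint_left.mpr fun q hq hq' => ?_
    obtain ⟨r, hr, rfl⟩ := Finset.mem_image.mp hq'
    exact hs r hr hq
  calc 2 * ∑ q ∈ s, f q = ∑ q ∈ s ∪ s.image Prod.swap, f q := by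
        rw [Finset.sum_union hdisj, Finset.sum_image (Prod.swap_injective.injOn)]
        simp only [hswap]
        ring
    _ ≤ ∑' q, f q := hf.sum_le_tsum _ fun q _ => hf0 q

theorem SimpleGraph.Walk.IsTrail.two_mul_sum_darts_le_tsum {G : SimpleGraph V} {x y : V}
    {w : G.Walk x y} (hw : w.IsTrail) {f : V × V → ℝ} (hf : Summable f)
    (hf0 : ∀ q, 0 ≤ f q) (hswap : ∀ q, f q.swap = f q) :
    2 * (w.darts.map fun d => f d.toProd).sum ≤ ∑' q, f q := by
  classical
  have hnodup : (w.darts.map Dart.toProd).Nodup :=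
    (hw.edges_nodup.of_map _).map Dart.toProd_injective
  have hsum : (w.darts.map fun d => f d.toProd).sum =
      ∑ q ∈ (w.darts.map Dart.toProd).toFinset, f q := by
    rw [List.sum_toFinset f hnodup, List.map_map]
    rfl
  rw [hsum]
  refine two_mul_sum_le_tsum_of_swap_notMem hf hf0 hswap fun q hq hq' => ?_
  simp only [List.mem_toFinset, List.mem_map] at hq hq'
  obtain ⟨d, hd, rfl⟩ := hq
  obtain ⟨d', hd', hswapped⟩ := hq'
  have hedge : d'.edge = d.edge := by
    rw [Dart.edge, Dart.edge, hswapped]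
    exact Sym2.eq_swap
  have hdd' : d' = d := List.inj_on_of_nodup_map hw.edges_nodup hd' hd hedge
  subst hdd'
  exact G.ne_of_adj d'.adj (congrArg Prod.fst hswapped)

theorem Real.sqrt_mul_sqrt_add_sqrt_mul_sqrt_le {a b a' b' : ℝ} (ha : 0 ≤ a) (hb : 0 ≤ b)
    (ha' : 0 ≤ a') (hb' : 0 ≤ b') :
    √a * √b + √a' * √b' ≤ √(a + a') * √(b + b') := by
  have h := Real.sum_sqrt_mul_sqrt_le Finset.univ (f := ![a, a']) (g := ![b, b'])
    (by simp [Fin.forall_fin_two, ha, ha']) (by simp [Fin.forall_fin_two, hb, hb'])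
  simpa [Fin.sum_univ_two] using h

theorem abs_eq_sqrt_one_div_mul_sqrt_mul_sq {c : ℝ} (hc : 0 < c) (t : ℝ) :
    |t| = √(1 / c) * √(c * t ^ 2) := by
  rw [← Real.sqrt_mul (by positivity), ← mul_assoc, one_div_mul_cancel hc.ne', one_mul,
    Real.sqrt_sq_eq_abs]

theorem SimpleGraph.Walk.abs_sub_le_sqrt_mul_sqrt {G : SimpleGraph V} {c : V → V → ℝ}
    (u : V → ℝ) {x y : V} (w : G.Walk x y) (hpos : ∀ d ∈ w.darts, 0 < c d.fst d.snd) :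
    |u y - u x| ≤ √((w.darts.map fun d => 1 / c d.fst d.snd).sum) *
      √((w.darts.map fun d => c d.fst d.snd * (u d.fst - u d.snd) ^ 2).sum) := by
  induction w with
  | nil => simp
  | @cons a b z _ w ih =>
    simp only [Walk.darts_cons, List.mem_cons, forall_eq_or_imp] at hpos
    obtain ⟨hab, hrest⟩ := hpos
    have hnonneg : ∀ (g : G.Dart → ℝ), (∀ d ∈ w.darts, 0 ≤ g d) →
        0 ≤ (w.darts.map g).sum := fun g hg =>
      List.sum_nonneg fun _ ha => by
        obtain ⟨d, hd, rfl⟩ := List.mem_map.mp ha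
        exact hg d hd
    simp only [Walk.darts_cons, List.map_cons, List.sum_cons]
    calc |u z - u a| ≤ |u a - u b| + |u z - u b| := by
          simpa only [abs_sub_comm (u b), add_comm] using abs_sub_le (u z) (u b) (u a)
      _ ≤ √(1 / c a b) * √(c a b * (u a - u b) ^ 2) + _ :=
          add_le_add (abs_eq_sqrt_one_div_mul_sqrt_mul_sq hab _).le (ih hrest)
      _ ≤ _ := Real.sqrt_mul_sqrt_add_sqrt_mul_sqrt_le (by positivity) (by positivity)
          (hnonneg _ fun d hd => (one_div_pos.mpr (hrest d hd)).le)
          (hnonneg _ fun d hd => mul_nonneg (hrest d hd).le (sq_nonneg _))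

theorem abs_sub_le_sqrt_mul_sqrt_energy {c : V → V → ℝ} (hsymm : ∀ x y, c x y = c y x)
    (hnonneg : ∀ x y, 0 ≤ c x y) {u : V → ℝ}
    (hfin : Summable (fun q : V × V => c q.1 q.2 * (u q.1 - u q.2) ^ 2)) {x y : V}
    (w : (conductanceGraph c).Walk x y) :
    |u y - u x| ≤ √((w.darts.map fun d => 1 / c d.fst d.snd).sum) * √(energy c u) := by
  classical
  have hpos := conductanceGraph_pos hsymm
  have hresist : (w.bypass.darts.map fun d => 1 / c d.fst d.snd).sum ≤
      (w.darts.map fun d => 1 / c d.fst d.snd).sum :=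
    (w.darts_bypass_sublist_darts.map _).sum_le_sum
      (by simpa using fun d _ => (one_div_pos.mpr (hpos d)).le)
  have henergy : (w.bypass.darts.map fun d => c d.fst d.snd * (u d.fst - u d.snd) ^ 2).sum ≤
      energy c u := by
    have h := w.bypass_isPath.isTrail.two_mul_sum_darts_le_tsum hfin
      (fun q => mul_nonneg (hnonneg _ _) (sq_nonneg _))
      (fun q => by rw [Prod.fst_swap, Prod.snd_swap, hsymm, ← neg_sub, neg_sq])
    rw [energy]
    linarith
  calc |u y - u x| ≤ _ := w.bypass.abs_sub_le_sqrt_mul_sqrt u fun d _ => hpos d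
    _ ≤ _ := by gcongr

theorem exists_walk_sum_one_div_le {c : V → V → ℝ} (n : ℕ) (p : Fin (n + 1) → V)
    (hpos : ∀ i : Fin n, 0 < c (p i.castSucc) (p i.succ)) :
    ∃ w : (conductanceGraph c).Walk (p 0) (p (Fin.last n)),
      (w.darts.map fun d => 1 / c d.fst d.snd).sum ≤
        ∑ i : Fin n, 1 / c (p i.castSucc) (p i.succ) := by
  induction n with
  | zero => exact ⟨Walk.nil, by simp⟩
  | succ n ih =>
    obtain ⟨w, hw⟩ := ih (fun i => p i.succ) fun i => by
      simp only [Fin.succ_castSucc]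
      exact hpos i.succ
    obtain ⟨w', hw'⟩ : ∃ w' : (conductanceGraph c).Walk (p 1) (p (Fin.last (n + 1))),
        (w'.darts.map fun d => 1 / c d.fst d.snd).sum ≤
          ∑ i : Fin n, 1 / c (p i.succ.castSucc) (p i.succ.succ) :=
      ⟨w.copy (congrArg p Fin.succ_zero_eq_one) (congrArg p (Fin.succ_last n)), by
        simpa only [Walk.darts_copy, Fin.succ_castSucc] using hw⟩
    have h01 : 0 < c (p 0) (p 1) := hpos 0
    rw [Fin.sum_univ_succ, Fin.castSucc_zero, Fin.succ_zero_eq_one]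
    by_cases hloop : p 0 = p 1
    · refine ⟨w'.copy hloop.symm rfl, ?_⟩
      simp only [Walk.darts_copy]
      linarith [one_div_pos.mpr h01]
    · have hadj : (conductanceGraph c).Adj (p 0) (p 1) := ⟨hloop, Or.inl h01⟩
      refine ⟨Walk.cons hadj w', ?_⟩
      simp only [Walk.darts_cons, List.map_cons, List.sum_cons]
      linarith

end

theorem evaluation_bounded {V : Type*} (c : V → V → ℝ)
    (hsymm : ∀ x y, c x y = c y x) (hnonneg : ∀ x y, 0 ≤ c x y)
    (o x : V) (u : V → ℝ)
    (hfin : Summable (fun p : V × V => c p.1 p.2 * (u p.1 - u p.2) ^ 2))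
    (n : ℕ) (p : Fin (n + 1) → V) (h0 : p 0 = o) (hn : p (Fin.last n) = x)
    (hpos : ∀ i : Fin n, 0 < c (p i.castSucc) (p i.succ)) :
    |u x - u o| ≤ Real.sqrt (∑ i : Fin n, 1 / c (p i.castSucc) (p i.succ)) *
      Real.sqrt ((1/2) * ∑' q : V × V, c q.1 q.2 * (u q.1 - u q.2) ^ 2) := by
  obtain ⟨w, hw⟩ := exists_walk_sum_one_div_le n p hpos
  subst h0 hn
  exact (abs_sub_le_sqrt_mul_sqrt_energy hsymm hnonneg hfin w).trans
    (mul_le_mul_of_nonneg_right (Real.sqrt_le_sqrt hw) (Real.sqrt_nonneg _))
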